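/- Let H be a real Hilbert space, C ⊆ H a nonempty closed convex set, x ∈ C and y ∈ N_C(x). If C is polyhedric at x for y, then the indicator function ι_C is twice epi-differentiable at x for y, and its second-order epi-derivative is the indicator function of T_C(x) ∩ (ℝy)^⊥; that is, the family of second-order difference quotients (δ²_t ι_C(x|y))_{t>0} Mosco epi-converges as t → 0⁺ to ι_{T_C(x) ∩ (ℝy)^⊥}. -/

import Mathlib

open Filter Topology
open scoped RealInnerProductSpace

open Classical in
/-- The indicator function of a set, with values in `EReal`:
`0` on `C` and `+∞` outside `C`. -/
noncomputable def indE {H : Type*} (C : Set H) (v : H) : EReal :=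
  if v ∈ C then 0 else ⊤

/-- The second-order difference quotient of `φ : H → EReal` at `x` for `y`
with parameter `t`: `z ↦ (φ(x + t z) − φ(x) − t⟪y, z⟫) / ((1/2)t²)`. -/
noncomputable def sodq {H : Type*} [NormedAddCommGroup H] [InnerProductSpace ℝ H]
    (φ : H → EReal) (x y : H) (t : ℝ) (z : H) : EReal :=
  (φ (x + t • z) - φ x - ((t * ⟪y, z⟫ : ℝ) : EReal)) / (((1 / 2 : ℝ) * t ^ 2 : ℝ) : EReal)

/-- The epigraph of `φ : H → EReal`, as a subset of `H × ℝ`. -/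
def epiE {H : Type*} (φ : H → EReal) : Set (H × ℝ) :=
  {p | φ p.1 ≤ (p.2 : EReal)}

/-- Weak convergence of a sequence in `H × ℝ`: weak convergence (tested by
inner products) of the first components and convergence of the second. -/
def WeakConvSeqP {H : Type*} [NormedAddCommGroup H] [InnerProductSpace ℝ H]
    (p : ℕ → H × ℝ) (l : H × ℝ) : Prop :=
  (∀ w : H, Tendsto (fun n => ⟪(p n).1, w⟫) atTop (nhds ⟪l.1, w⟫)) ∧
    Tendsto (fun n => (p n).2) atTop (nhds l.2)

/-- Weak outer limit (w-limsup) of a family of subsets of `H × ℝ`, as `t → 0⁺`. -/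
def wLimsupEpi {H : Type*} [NormedAddCommGroup H] [InnerProductSpace ℝ H]
    (A : ℝ → Set (H × ℝ)) : Set (H × ℝ) :=
  {q | ∃ t : ℕ → ℝ, (∀ n, 0 < t n) ∧ Tendsto t atTop (nhds 0) ∧
    ∃ p : ℕ → H × ℝ, WeakConvSeqP p q ∧ ∀ n, p n ∈ A (t n)}

/-- Strong inner limit (liminf) of a family of subsets of `H × ℝ`, as `t → 0⁺`. -/
def sLiminfEpi {H : Type*} [NormedAddCommGroup H] [InnerProductSpace ℝ H]
    (A : ℝ → Set (H × ℝ)) : Set (H × ℝ) :=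
  {q | ∀ t : ℕ → ℝ, (∀ n, 0 < t n) → Tendsto t atTop (nhds 0) →
    ∃ p : ℕ → H × ℝ, Tendsto p atTop (nhds q) ∧ ∃ N : ℕ, ∀ n ≥ N, p n ∈ A (t n)}

/-- Mosco epi-convergence of a family `(φ_t)_{t>0}` to `ψ` as `t → 0⁺`:
the epigraphs Mosco-converge, i.e. `w-limsup epi(φ_t) ⊆ epi(ψ) ⊆ liminf epi(φ_t)`. -/
def MoscoEpiConv {H : Type*} [NormedAddCommGroup H] [InnerProductSpace ℝ H]
    (φ : ℝ → H → EReal) (ψ : H → EReal) : Prop :=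
  wLimsupEpi (fun t => epiE (φ t)) ⊆ epiE ψ ∧
    epiE ψ ⊆ sLiminfEpi (fun t => epiE (φ t))

/-- The tangent cone to a convex set `C` at `x`:
the closure of `{z | ∃ λ > 0, x + λ z ∈ C}`. -/
def tangentConeSet {H : Type*} [NormedAddCommGroup H] [InnerProductSpace ℝ H]
    (C : Set H) (x : H) : Set H :=
  closure {z | ∃ l : ℝ, 0 < l ∧ x + l • z ∈ C}

/-
Upper bound (weak limsup): a point of `epi δ²_t ι_C` has `x + t z ∈ C` and
`−2⟪y, z⟫/t ≤ β`. Since `y` is normal, `⟪y, z⟫ ≤ 0`, so `0 ≤ −⟪y, z⟫ ≤ β t / 2 → 0`; a weak limit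
therefore lies in `y^⊥`, has `β ≥ 0`, and lies in `T_C(x)` because the closed convex set `T_C(x)`
is weakly sequentially closed (Hahn–Banach plus Riesz).

Lower bound (strong liminf): polyhedricity says every `z ∈ T_C(x) ∩ y^⊥` is a limit of radial
directions `w_k ∈ y^⊥`. For each fixed `k`, `x + t w_k ∈ C` once `t` is small, and the
difference quotient there equals `−2⟪y, w_k⟫/t = 0`; a diagonal choice `k = κ(n) → ∞` gives
a recovery sequence `(w_{κ(n)}, β)`.
-/

def radialCone {H : Type*} [NormedAddCommGroup H] [InnerProductSpace ℝ H]
    (C : Set H) (x : H) : Set H :=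
  {z | ∃ l : ℝ, 0 < l ∧ x + l • z ∈ C}

lemma Nat.exists_tendsto_atTop_eventually {P : ℕ → ℕ → Prop}
    (h : ∀ k, ∀ᶠ n in atTop, P k n) :
    ∃ κ : ℕ → ℕ, Tendsto κ atTop atTop ∧ ∀ᶠ n in atTop, P (κ n) n := by
  choose N hN using fun k => eventually_atTop.mp (h k)
  refine ⟨fun n => Nat.findGreatest (fun k => N k ≤ n) n, ?_, ?_⟩
  · refine tendsto_atTop_atTop.mpr fun K => ⟨max (N K) K, fun n hn => ?_⟩
    exact Nat.le_findGreatest ((le_max_right _ _).trans hn) ((le_max_left _ _).trans hn)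
  · exact eventually_atTop.mpr ⟨N 0, fun n hn =>
      hN _ _ (Nat.findGreatest_spec (P := fun k => N k ≤ n) (Nat.zero_le n) hn)⟩

lemma mem_epiE_indE {H : Type*} {K : Set H} (z : H) (β : ℝ) :
    (z, β) ∈ epiE (indE K) ↔ z ∈ K ∧ 0 ≤ β := by
  simp only [epiE, indE, Set.mem_ofPred_eq]
  split_ifs with h <;> simp [h]

section

variable {H : Type*} [NormedAddCommGroup H] [InnerProductSpace ℝ H]

lemma Convex.mem_of_forall_inner_tendsto [CompleteSpace H] {S : Set H} (hS : Convex ℝ S)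
    (hScl : IsClosed S) {u : ℕ → H} (hu : ∀ n, u n ∈ S) {z : H}
    (hw : ∀ w : H, Tendsto (fun n => ⟪u n, w⟫) atTop (𝓝 ⟪z, w⟫)) : z ∈ S := by
  by_contra hz
  obtain ⟨f, c, hfz, hfS⟩ := geometric_hahn_banach_point_closed hS hScl hz
  have hf : ∀ v, ⟪v, (InnerProductSpace.toDual ℝ H).symm f⟫ = f v := fun v => by
    rw [real_inner_comm, InnerProductSpace.toDual_symm_apply]
  have hcz : c ≤ f z := by
    rw [← hf]
    exact ge_of_tendsto (hw _) (Eventually.of_forall fun n => (hf (u n)).symm ▸ (hfS _ (hu n)).le)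
  exact (hfz.trans_le hcz).false

namespace radialCone

variable {C : Set H} {x : H}

lemma add_smul_mem (hconv : Convex ℝ C) (hx : x ∈ C) {z : H} {l t : ℝ}
    (hl : x + l • z ∈ C) (ht : 0 < t) (htl : t ≤ l) : x + t • z ∈ C := by
  have hl0 : 0 < l := ht.trans_le htl
  have h := hconv.add_smul_mem hx hl ⟨(div_pos ht hl0).le, (div_le_one hl0).mpr htl⟩
  rwa [smul_smul, div_mul_cancel₀ _ hl0.ne'] at h

lemma eventually_add_smul_mem (hconv : Convex ℝ C) (hx : x ∈ C) {z : H}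
    (hz : z ∈ radialCone C x) {t : ℕ → ℝ} (htpos : ∀ n, 0 < t n)
    (ht0 : Tendsto t atTop (𝓝 0)) : ∀ᶠ n in atTop, x + t n • z ∈ C := by
  obtain ⟨l, hl, hlC⟩ := hz
  filter_upwards [ht0.eventually_le_const hl] with n hn
  exact add_smul_mem hconv hx hlC (htpos n) hn

lemma convex (hconv : Convex ℝ C) (hx : x ∈ C) : Convex ℝ (radialCone C x) := by
  rintro z₁ ⟨l₁, hl₁, h₁⟩ z₂ ⟨l₂, hl₂, h₂⟩ a b ha hb hab
  have hl : 0 < min l₁ l₂ := lt_min hl₁ hl₂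
  refine ⟨min l₁ l₂, hl, ?_⟩
  have h := hconv (add_smul_mem hconv hx h₁ hl (min_le_left _ _))
    (add_smul_mem hconv hx h₂ hl (min_le_right _ _)) ha hb hab
  rwa [show a • (x + min l₁ l₂ • z₁) + b • (x + min l₁ l₂ • z₂)
      = (a + b) • x + min l₁ l₂ • (a • z₁ + b • z₂) by module, hab, one_smul] at h

end radialCone

lemma inner_nonpos_of_add_smul_mem {C : Set H} {x y z : H}
    (hy : ∀ c ∈ C, ⟪y, c - x⟫ ≤ 0) {t : ℝ} (ht : 0 < t) (h : x + t • z ∈ C) :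
    ⟪y, z⟫ ≤ 0 := by
  have := hy _ h
  rw [add_sub_cancel_left, inner_smul_right] at this
  exact nonpos_of_mul_nonpos_right this ht

open Classical in
lemma sodq_indE {C : Set H} {x : H} (hx : x ∈ C) (y : H) {t : ℝ} (ht : 0 < t) (z : H) :
    sodq (indE C) x y t z = if x + t • z ∈ C then ((-2 * ⟪y, z⟫ / t : ℝ) : EReal) else ⊤ := by
  simp only [sodq, indE, if_pos hx]
  split_ifs
  · rw [← EReal.coe_zero, ← EReal.coe_sub, ← EReal.coe_sub, ← EReal.coe_div]
    congr 1
    field_simp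
    ring
  · rw [← EReal.coe_zero, EReal.top_sub_coe, EReal.top_sub_coe,
      EReal.top_div_of_pos_ne_top (by exact_mod_cast by positivity) (EReal.coe_ne_top _)]

lemma mem_epiE_sodq_indE {C : Set H} {x : H} (hx : x ∈ C) (y : H) {t : ℝ} (ht : 0 < t)
    (z : H) (β : ℝ) :
    (z, β) ∈ epiE (sodq (indE C) x y t) ↔ x + t • z ∈ C ∧ -2 * ⟪y, z⟫ / t ≤ β := by
  simp only [epiE, Set.mem_ofPred_eq, sodq_indE hx y ht]
  split_ifs with h <;> simp [h]

lemma wLimsupEpi_sodq_indE_subset [CompleteSpace H] {C : Set H} (hconv : Convex ℝ C) {x : H}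
    (hx : x ∈ C) {y : H} (hy : ∀ c ∈ C, ⟪y, c - x⟫ ≤ 0) :
    wLimsupEpi (fun t => epiE (sodq (indE C) x y t))
      ⊆ epiE (indE (tangentConeSet C x ∩ {z | ⟪z, y⟫ = 0})) := by
  rintro ⟨z, β⟩ ⟨t, htpos, ht0, p, ⟨hweak, hβlim⟩, hmem⟩
  replace hmem := fun n => (mem_epiE_sodq_indE hx y (htpos n) _ _).mp (hmem n)
  have hnonpos : ∀ n, ⟪y, (p n).1⟫ ≤ 0 := fun n =>
    inner_nonpos_of_add_smul_mem hy (htpos n) (hmem n).1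
  have hbound : ∀ n, -⟪y, (p n).1⟫ ≤ (p n).2 * t n / 2 := fun n => by
    linarith [(div_le_iff₀ (htpos n)).mp (hmem n).2]
  have hβn : ∀ n, 0 ≤ (p n).2 :=
    fun n => (div_nonneg (by linarith [hnonpos n]) (htpos n).le).trans (hmem n).2
  have hinner : Tendsto (fun n => ⟪(p n).1, y⟫) atTop (𝓝 0) := by
    have h := squeeze_zero (fun n => neg_nonneg.mpr (hnonpos n)) hbound
      (by simpa using (hβlim.mul ht0).div_const 2)
    simpa [real_inner_comm] using h.neg
  refine (mem_epiE_indE z β).mpr ⟨⟨?_, tendsto_nhds_unique (hweak y) hinner⟩,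
    ge_of_tendsto' hβlim hβn⟩
  exact (radialCone.convex hconv hx).closure.mem_of_forall_inner_tendsto isClosed_closure
    (fun n => subset_closure ⟨t n, htpos n, (hmem n).1⟩) hweak

lemma epiE_indE_subset_sLiminfEpi_sodq {C : Set H} (hconv : Convex ℝ C) {x : H} (hx : x ∈ C)
    {y : H} {K : Set H} (hK : K ⊆ closure (radialCone C x ∩ {z | ⟪z, y⟫ = 0})) :
    epiE (indE K) ⊆ sLiminfEpi (fun t => epiE (sodq (indE C) x y t)) := by
  rintro ⟨z, β⟩ hzβ t htpos ht0
  obtain ⟨hz, hβ⟩ := (mem_epiE_indE z β).mp hzβ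
  obtain ⟨w, hw, hwz⟩ := mem_closure_iff_seq_limit.mp (hK hz)
  obtain ⟨κ, hκ, hκC⟩ := Nat.exists_tendsto_atTop_eventually fun k =>
    radialCone.eventually_add_smul_mem hconv hx (hw k).1 htpos ht0
  obtain ⟨N, hN⟩ := eventually_atTop.mp hκC
  refine ⟨fun n => (w (κ n), β), (hwz.comp hκ).prodMk_nhds tendsto_const_nhds, N, fun n hn => ?_⟩
  rw [mem_epiE_sodq_indE hx y (htpos n), real_inner_comm, (hw (κ n)).2]
  simpa using ⟨hN n hn, hβ⟩

end

theorem statement6_general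
    {H : Type*} [NormedAddCommGroup H] [InnerProductSpace ℝ H] [CompleteSpace H]
    (C : Set H) (hconv : Convex ℝ C)
    (x : H) (hx : x ∈ C) (y : H) (hy : ∀ c ∈ C, ⟪y, c - x⟫ ≤ 0)
    (hpoly : tangentConeSet C x ∩ {z | ⟪z, y⟫ = 0}
      = closure ({z | ∃ l : ℝ, 0 < l ∧ x + l • z ∈ C} ∩ {z | ⟪z, y⟫ = 0})) :
    MoscoEpiConv (fun t => sodq (indE C) x y t)
      (indE (tangentConeSet C x ∩ {z | ⟪z, y⟫ = 0})) :=
  ⟨wLimsupEpi_sodq_indE_subset hconv hx hy,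
    epiE_indE_subset_sLiminfEpi_sodq hconv hx hpoly.subset⟩

/-- If a nonempty closed convex set `C ⊆ H` is polyhedric at
`x ∈ C` for `y ∈ N_C(x)`, then the indicator function `ι_C` is twice
epi-differentiable at `x` for `y`, with second-order epi-derivative the
indicator of `T_C(x) ∩ (ℝy)^⊥`: the family of second-order difference
quotients Mosco epi-converges to `ι_{T_C(x) ∩ (ℝy)^⊥}` as `t → 0⁺`. -/
theorem statement6
    {H : Type*} [NormedAddCommGroup H] [InnerProductSpace ℝ H] [CompleteSpace H]
    (C : Set H) (hne : C.Nonempty) (hcl : IsClosed C) (hconv : Convex ℝ C)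
    (x : H) (hx : x ∈ C) (y : H) (hy : ∀ c ∈ C, ⟪y, c - x⟫ ≤ 0)
    (hpoly : tangentConeSet C x ∩ {z | ⟪z, y⟫ = 0}
      = closure ({z | ∃ l : ℝ, 0 < l ∧ x + l • z ∈ C} ∩ {z | ⟪z, y⟫ = 0})) :
    MoscoEpiConv (fun t => sodq (indE C) x y t)
      (indE (tangentConeSet C x ∩ {z | ⟪z, y⟫ = 0})) :=
  statement6_general C hconv x hx y hy hpoly
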